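/- Let Φ(ξ) = |ξ|^{1/2}, t, x ∈ ℝ with tx ≠ 0, and suppose k ∈ ℤ satisfies |t/x|/16 ≤ 2^{k/2} ≤ 16|t/x|. Let ξ₀ be the critical point of Q_{t,x}(ξ) = xξ + t|ξ|^{1/2} and ℓ ∈ ℤ. Then for every ξ with 2^k ≤ |ξ| ≤ 2^{k+1} and 2^{ℓ−1} ≤ |ξ − ξ₀| ≤ 2^{ℓ+1}, one has |Q'_{t,x}(ξ)| ≥ c|t|·2^{ℓ − 3k/2} for an absolute constant c > 0. -/

import Mathlib

open Real

/-!
Write `u = sgn ξ · √|ξ|` and `v = sgn ξ₀ · √|ξ₀|`. Then `Q'(ξ) = x + t / (2u)`, and the critical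
point equation `x = -t / (2v)` turns this into `Q'(ξ) = (t / 2) (v - u) / (u v)`; it also gives
`|v| = |t / x| / 2 ≲ 2^{k/2}`, while `|u| ≲ 2^{k/2}` because `|ξ| ≤ 2^{k+1}`. Since `ξ = u |u|`,
`|ξ - ξ₀| ≤ |u - v| (|u| + |v|)` whatever the signs of `u` and `v`, so
`|Q'(ξ)| ≥ |t| |ξ - ξ₀| / (2 (|u| + |v|) |u| |v|) ≳ |t| 2^ℓ / 2^{3k/2}`.
-/

noncomputable def signedSqrt (ξ : ℝ) : ℝ := SignType.sign ξ * √|ξ|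

lemma abs_signedSqrt (ξ : ℝ) : |signedSqrt ξ| = √|ξ| := by
  rcases lt_trichotomy ξ 0 with h | rfl | h <;> simp [signedSqrt, *]

lemma signedSqrt_ne_zero {ξ : ℝ} (hξ : ξ ≠ 0) : signedSqrt ξ ≠ 0 := by
  rw [← abs_ne_zero, abs_signedSqrt]; positivity

lemma signedSqrt_mul_abs_self (ξ : ℝ) : signedSqrt ξ * |signedSqrt ξ| = ξ := by
  rw [abs_signedSqrt, signedSqrt, mul_assoc, mul_self_sqrt (abs_nonneg ξ), sign_mul_abs]

lemma abs_sub_le_abs_signedSqrt_sub_mul (ξ η : ℝ) :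
    |ξ - η| ≤ |signedSqrt ξ - signedSqrt η| * (√|ξ| + √|η|) := by
  rw [← abs_signedSqrt ξ, ← abs_signedSqrt η]
  conv_lhs => rw [← signedSqrt_mul_abs_self ξ, ← signedSqrt_mul_abs_self η]
  generalize signedSqrt ξ = u, signedSqrt η = v
  have h₁ := le_abs_self (u - v)
  have h₂ := neg_abs_le (u - v)
  rw [abs_le]
  rcases le_total 0 u with hu | hu <;> rcases le_total 0 v with hv | hv <;>
    simp only [abs_of_nonneg, abs_of_nonpos, *] <;> constructor <;> nlinarith

noncomputable def phase (t x η : ℝ) : ℝ := x * η + t * |η| ^ ((1 : ℝ) / 2)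

section Phase

variable {t x ξ₀ ξ : ℝ}

lemma phase_eq_sqrt (t x : ℝ) : phase t x = fun η ↦ x * η + t * √|η| := by
  funext η; rw [phase, sqrt_eq_rpow]

lemma hasDerivAt_phase (hξ : ξ ≠ 0) :
    HasDerivAt (phase t x) (x + t / (2 * signedSqrt ξ)) ξ := by
  rw [phase_eq_sqrt]
  refine (((hasDerivAt_id' ξ).const_mul x).add
    (((hasDerivAt_abs hξ).sqrt (abs_ne_zero.mpr hξ)).const_mul t)).congr_deriv ?_
  rcases hξ.lt_or_gt with h | h
  · rw [signedSqrt, sign_neg h, SignType.coe_neg, SignType.coe_one]; ring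
  · rw [signedSqrt, sign_pos h, SignType.coe_one]; ring

lemma eq_of_deriv_phase_eq_zero (hξ₀ : ξ₀ ≠ 0) (h : deriv (phase t x) ξ₀ = 0) :
    x = -(t / (2 * signedSqrt ξ₀)) := by
  rw [(hasDerivAt_phase hξ₀).deriv] at h
  linarith

lemma abs_div_eq_of_deriv_phase_eq_zero (ht : t ≠ 0) (hξ₀ : ξ₀ ≠ 0)
    (h : deriv (phase t x) ξ₀ = 0) : |t / x| = 2 * √|ξ₀| := by
  have := signedSqrt_ne_zero hξ₀
  rw [eq_of_deriv_phase_eq_zero hξ₀ h, div_neg, abs_neg, div_div_eq_mul_div,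
    mul_div_cancel_left₀ _ ht, abs_mul, abs_two, abs_signedSqrt]

lemma deriv_phase_eq_of_deriv_phase_eq_zero (hξ₀ : ξ₀ ≠ 0) (hξ : ξ ≠ 0)
    (h : deriv (phase t x) ξ₀ = 0) :
    deriv (phase t x) ξ = t / 2 * ((signedSqrt ξ)⁻¹ - (signedSqrt ξ₀)⁻¹) := by
  rw [(hasDerivAt_phase hξ).deriv, eq_of_deriv_phase_eq_zero hξ₀ h]
  field_simp
  ring

lemma div_le_abs_deriv_phase_of_deriv_phase_eq_zero (hξ₀ : ξ₀ ≠ 0) (hξ : ξ ≠ 0)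
    (h : deriv (phase t x) ξ₀ = 0) :
    |t| * |ξ - ξ₀| / (2 * (√|ξ| + √|ξ₀|) * (√|ξ| * √|ξ₀|)) ≤ |deriv (phase t x) ξ| := by
  have hS : 0 < √|ξ| + √|ξ₀| := by positivity
  rw [deriv_phase_eq_of_deriv_phase_eq_zero hξ₀ hξ h,
    inv_sub_inv (signedSqrt_ne_zero hξ) (signedSqrt_ne_zero hξ₀), abs_mul, abs_div, abs_div,
    abs_mul, abs_two, abs_signedSqrt, abs_signedSqrt]
  calc |t| * |ξ - ξ₀| / (2 * (√|ξ| + √|ξ₀|) * (√|ξ| * √|ξ₀|))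
      ≤ |t| * (|signedSqrt ξ - signedSqrt ξ₀| * (√|ξ| + √|ξ₀|))
          / (2 * (√|ξ| + √|ξ₀|) * (√|ξ| * √|ξ₀|)) := by
        gcongr; exact abs_sub_le_abs_signedSqrt_sub_mul ξ ξ₀
    _ = |t| / 2 * (|signedSqrt ξ₀ - signedSqrt ξ| / (√|ξ| * √|ξ₀|)) := by
        rw [abs_sub_comm (signedSqrt ξ₀)]; field_simp

end Phase

lemma two_rpow_half_sq (k : ℤ) : ((2 : ℝ) ^ ((k : ℝ) / 2)) ^ 2 = 2 ^ k := by
  rw [← rpow_natCast, ← rpow_mul zero_le_two]; norm_num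

lemma two_rpow_sub_three_halves (k ℓ : ℤ) :
    (2 : ℝ) ^ ((ℓ : ℝ) - 3 * (k : ℝ) / 2) = 2 * 2 ^ (ℓ - 1) / ((2 : ℝ) ^ ((k : ℝ) / 2)) ^ 3 := by
  rw [← rpow_natCast, ← rpow_mul zero_le_two, rpow_sub two_pos, ← zpow_one_add₀ two_ne_zero,
    add_sub_cancel, ← rpow_intCast]
  congr 2; push_cast; ring

/-- lower bound `|Q'_{t,x}(ξ)| ≳ |t| 2^{ℓ−3k/2}` away from the
stationary point `ξ₀` in the stationary-frequency regime `|t/x|/16 ≤ 2^{k/2} ≤ 16|t/x|`. -/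
theorem stationary_regime_phase_lower_bound :
    ∃ c > 0, ∀ (t x : ℝ) (k ℓ : ℤ) (ξ₀ : ℝ), t * x ≠ 0 →
      |t / x| / 16 ≤ (2 : ℝ) ^ ((k : ℝ) / 2) →
      (2 : ℝ) ^ ((k : ℝ) / 2) ≤ 16 * |t / x| →
      ξ₀ ≠ 0 →
      deriv (fun ξ : ℝ => x * ξ + t * |ξ| ^ ((1 : ℝ) / 2)) ξ₀ = 0 →
      ∀ ξ : ℝ, (2 : ℝ) ^ k ≤ |ξ| → |ξ| ≤ (2 : ℝ) ^ (k + 1) →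
        (2 : ℝ) ^ (ℓ - 1 : ℤ) ≤ |ξ - ξ₀| → |ξ - ξ₀| ≤ (2 : ℝ) ^ (ℓ + 1 : ℤ) →
        c * |t| * (2 : ℝ) ^ ((ℓ : ℝ) - 3 * (k : ℝ) / 2) ≤
          |deriv (fun η : ℝ => x * η + t * |η| ^ ((1 : ℝ) / 2)) ξ| := by
  refine ⟨1 / 640, by norm_num, ?_⟩
  intro t x k ℓ ξ₀ htx hscale _ hξ₀ hcrit ξ hξ_lo hξ_hi hdist _
  have hξ : ξ ≠ 0 := abs_pos.mp ((zpow_pos two_pos k).trans_le hξ_lo)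
  set P := (2 : ℝ) ^ ((k : ℝ) / 2)
  have hP : 0 < P := by positivity
  have hξ_sqrt : √|ξ| ≤ 2 * P := by
    rw [sqrt_le_left (by positivity), mul_pow, two_rpow_half_sq]
    rw [zpow_add_one₀ two_ne_zero] at hξ_hi
    linarith [zpow_pos (two_pos : (0 : ℝ) < 2) k]
  have hξ₀_sqrt : √|ξ₀| ≤ 8 * P := by
    rw [abs_div_eq_of_deriv_phase_eq_zero (left_ne_zero_of_mul htx) hξ₀ hcrit] at hscale
    linarith
  calc 1 / 640 * |t| * (2 : ℝ) ^ ((ℓ : ℝ) - 3 * (k : ℝ) / 2)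
      = |t| * 2 ^ (ℓ - 1) / (2 * (2 * P + 8 * P) * (2 * P * (8 * P))) := by
        rw [two_rpow_sub_three_halves]; field_simp; ring
    _ ≤ |t| * |ξ - ξ₀| / (2 * (√|ξ| + √|ξ₀|) * (√|ξ| * √|ξ₀|)) := by gcongr
    _ ≤ _ := div_le_abs_deriv_phase_of_deriv_phase_eq_zero hξ₀ hξ hcrit
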